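/- arXiv:1709.02950 — 2 statements merged into one kernel-verified Lean document; each statement's English description precedes it below -/
import Mathlib

section
/- Vanishing of non-coherent terms (intermediate step in the proof of Corollary 1): in the asymptotic setting with z_t = 0 and 0 ≤ z_r < 1/2, for every UE index k each of the three sequences B_k(M)/(κ_{t0} A_k(M)), (1 − κ_r(M)) D_k(M)/(κ_r(M) κ_{t0} A_k(M)), and E_k(M)/(κ_r(M) κ_{t0} A_k(M)) converges to 0 as M → ∞. -/
open Finset Filter Topology

noncomputable section

/-- Fixed system parameters of the cell-free massive MIMO uplink:
`K` UEs, pilot length `τ`, pilot power `ρp`, noise power `σ2`,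
power-control coefficients `γ`, pilot correlations `δ` (δ k k' = |φ_k^H φ_{k'}|²),
and large-scale fading coefficients `β m k` (AP index `m ∈ ℕ`, UE index `k`). -/
structure Params where
  K : ℕ
  τ : ℕ
  ρp : ℝ
  σ2 : ℝ
  γ : Fin K → ℝ
  δ : Fin K → Fin K → ℝ
  β : ℕ → Fin K → ℝ

namespace Params

variable (P : Params)

/-- LMMSE coefficient `c_{mk}` for hardware quality factors `κt, κr`. -/
def c (κt κr : ℝ) (m : ℕ) (k : Fin P.K) : ℝ :=
  Real.sqrt ((P.τ : ℝ) * P.ρp * κr * κt) * P.β m k /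
    (P.ρp * ∑ k' : Fin P.K, P.β m k' *
      (κr * κt * (P.τ : ℝ) * P.δ k k' + (1 - κr * κt)) + P.σ2)

/-- Mean-square of the LMMSE channel estimate `λ_{mk}`. -/
def lam (κt κr : ℝ) (m : ℕ) (k : Fin P.K) : ℝ :=
  Real.sqrt ((P.τ : ℝ) * P.ρp * κr * κt) * P.β m k * P.c κt κr m k

/-- Desired-signal term `A_k` (using APs `0, …, M-1`). -/
def A (κt κr : ℝ) (M : ℕ) (k : Fin P.K) : ℝ :=
  P.γ k * (∑ m ∈ Finset.range M, P.lam κt κr m k) ^ 2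

/-- Non-coherent interference term `B_k`. -/
def B (κt κr : ℝ) (M : ℕ) (k : Fin P.K) : ℝ :=
  ∑ k' : Fin P.K, P.γ k' *
    ((∑ m ∈ Finset.range M, P.lam κt κr m k * P.β m k') +
      P.ρp * (1 - κr) * ∑ m ∈ Finset.range M, (P.c κt κr m k) ^ 2 * (P.β m k') ^ 2)

/-- Coherent interference term `C_k`. -/
def C (κt κr : ℝ) (M : ℕ) (k : Fin P.K) : ℝ :=
  ∑ k' : Fin P.K, P.γ k' * (P.δ k k' + (1 - κt) / (κt * (P.τ : ℝ))) *
    (∑ m ∈ Finset.range M, P.lam κt κr m k * (P.β m k' / P.β m k)) ^ 2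

/-- AP receiver-distortion term `D_k`. -/
def D (κt κr : ℝ) (M : ℕ) (k : Fin P.K) : ℝ :=
  ∑ m ∈ Finset.range M, ∑ k' : Fin P.K, P.γ k' *
    (P.lam κt κr m k * P.β m k' +
      (P.c κt κr m k) ^ 2 * (1 - κr) * P.ρp * (P.β m k') ^ 2 +
      (P.c κt κr m k) ^ 2 * κr * P.ρp * P.β m k' *
        ((P.τ : ℝ) * κt * P.δ k k' + (1 - κt)))

/-- Noise term `E_k` for uplink power `ρu`. -/
def E (κt κr ρu : ℝ) (M : ℕ) (k : Fin P.K) : ℝ :=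
  (P.σ2 / ρu) * ∑ m ∈ Finset.range M, P.lam κt κr m k

/-- Effective SINR of UE `k` (Theorem 1). -/
def SINR (κt κr ρu : ℝ) (M : ℕ) (k : Fin P.K) : ℝ :=
  κr * κt * P.A κt κr M k /
    (κr * P.B κt κr M k + κr * P.C κt κr M k - κr * κt * P.A κt κr M k +
      (1 - κr) * P.D κt κr M k + P.E κt κr ρu M k)

/-- Spectral efficiency of UE `k` (Theorem 1): `R_k = log₂(1 + SINR_k)`. -/
def R (κt κr ρu : ℝ) (M : ℕ) (k : Fin P.K) : ℝ :=
  Real.logb 2 (1 + P.SINR κt κr ρu M k)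

/-- Standing assumptions on the fixed parameters: `K ≥ 1`, `τ ≥ 1`, `ρp, σ² > 0`,
`γ_k ∈ (0,1]`, `δ_{kk'} ∈ [0,1]`, `δ_{kk} = 1`. -/
def Valid : Prop :=
  1 ≤ P.K ∧ 1 ≤ P.τ ∧ 0 < P.ρp ∧ 0 < P.σ2 ∧
  (∀ k, 0 < P.γ k ∧ P.γ k ≤ 1) ∧
  (∀ k k', 0 ≤ P.δ k k' ∧ P.δ k k' ≤ 1) ∧
  (∀ k, P.δ k k = 1)

end Params

/-!
Uniformly in the AP index `m`, the denominator of `c_{mk}` lies between `σ²` and a constant, so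
`λ_{mk} = Θ(κ_r)` and `c_{mk}² = O(κ_r)`. Hence `A_k ≳ (M κ_r)²` while `B_k, D_k, E_k ≲ M κ_r`,
and every ratio is `O(1 / (M κ_r²)) = O(M^{2 z_r - 1})`, which tends to `0` because `z_r < 1/2`.
-/

lemma mul_mul_add_one_sub_mem_Icc {q τ d : ℝ} (hq : q ∈ Set.Icc 0 1) (hτ : 0 ≤ τ)
    (hd : d ∈ Set.Icc 0 1) : q * τ * d + (1 - q) ∈ Set.Icc 0 (τ + 1) := by
  obtain ⟨hq0, hq1⟩ := hq
  obtain ⟨hd0, hd1⟩ := hd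
  have hqd : q * d ≤ 1 := mul_le_one₀ hq1 hd0 hd1
  constructor
  · nlinarith [mul_nonneg (mul_nonneg hq0 hτ) hd0]
  · nlinarith [mul_nonneg hτ (sub_nonneg.2 hqd)]

lemma sum_range_sum_mul_mem_Icc {ι : Type*} [Fintype ι] {w : ι → ℝ} {f : ℕ → ι → ℝ} {b : ℝ}
    (hw : ∀ i, w i ∈ Set.Icc 0 1) (hf : ∀ m i, f m i ∈ Set.Icc 0 b) (M : ℕ) :
    ∑ m ∈ range M, ∑ i, w i * f m i ∈ Set.Icc 0 (M * (Fintype.card ι * b)) := by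
  have hterm : ∀ m i, w i * f m i ∈ Set.Icc 0 b := fun m i =>
    ⟨mul_nonneg (hw i).1 (hf m i).1,
      (mul_le_of_le_one_left (hf m i).1 (hw i).2).trans (hf m i).2⟩
  refine ⟨sum_nonneg fun m _ => sum_nonneg fun i _ => (hterm m i).1, ?_⟩
  calc ∑ m ∈ range M, ∑ i, w i * f m i ≤ ∑ _m ∈ range M, ∑ _i : ι, b :=
        sum_le_sum fun m _ => sum_le_sum fun i _ => (hterm m i).2
    _ = M * (Fintype.card ι * b) := by simp

lemma div_mul_mul_mem_Icc_of_mem_Icc_of_mul_sq_le {x A a b u κ M : ℝ}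
    (hx : x ∈ Set.Icc 0 (b * (M * κ))) (hA : a * (M * κ) ^ 2 ≤ A) (ha : 0 < a) (hu : 0 < u)
    (hκ : 0 < κ) (hM : 0 < M) : x / (κ * u * A) ∈ Set.Icc 0 (b / (u * a) / (M * κ ^ 2)) := by
  have hA0 : 0 < A := lt_of_lt_of_le (by positivity) hA
  refine ⟨div_nonneg hx.1 (by positivity), ?_⟩
  calc x / (κ * u * A) ≤ b * (M * κ) / (κ * u * (a * (M * κ) ^ 2)) :=
        div_le_div₀ (hx.1.trans hx.2) hx.2 (by positivity) (by gcongr)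
    _ = b / (u * a) / (M * κ ^ 2) := by field_simp

lemma div_rpow_mem_Ioc {κ0 z : ℝ} (hκ0 : κ0 ∈ Set.Ioc 0 1) (hz : 0 ≤ z) {M : ℕ} (hM : 0 < M) :
    κ0 / (M : ℝ) ^ z ∈ Set.Ioc 0 1 := by
  have hMz : 1 ≤ (M : ℝ) ^ z := Real.one_le_rpow (Nat.one_le_cast.2 hM) hz
  exact ⟨div_pos hκ0.1 (zero_lt_one.trans_le hMz),
    div_le_one_of_le₀ (hκ0.2.trans hMz) (by positivity)⟩

lemma tendsto_natCast_mul_div_rpow_sq_atTop {κ0 z : ℝ} (hκ0 : 0 < κ0) (hz : z < 1 / 2) :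
    Tendsto (fun M : ℕ => (M : ℝ) * (κ0 / (M : ℝ) ^ z) ^ 2) atTop atTop := by
  have hpow : Tendsto (fun M : ℕ => κ0 ^ 2 * (M : ℝ) ^ (1 - z * 2)) atTop atTop :=
    ((tendsto_rpow_atTop (by linarith)).comp tendsto_natCast_atTop_atTop).const_mul_atTop
      (pow_pos hκ0 2)
  refine hpow.congr' ((eventually_gt_atTop 0).mono fun M hM => ?_)
  have hM' : (0 : ℝ) < M := Nat.cast_pos.2 hM
  rw [Real.rpow_sub hM', Real.rpow_one, Real.rpow_mul hM'.le, Real.rpow_two]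
  field_simp

namespace Params

variable {P : Params} {βmin βmax κt κr L C : ℝ} {m M : ℕ} {k : Fin P.K}

namespace Valid

lemma τ_pos (hP : P.Valid) : (0 : ℝ) < P.τ := Nat.cast_pos.2 hP.2.1

lemma ρp_pos (hP : P.Valid) : 0 < P.ρp := hP.2.2.1

lemma σ2_pos (hP : P.Valid) : 0 < P.σ2 := hP.2.2.2.1

lemma γ_pos (hP : P.Valid) (k : Fin P.K) : 0 < P.γ k := (hP.2.2.2.2.1 k).1

lemma γ_mem_Icc (hP : P.Valid) (k : Fin P.K) : P.γ k ∈ Set.Icc 0 1 :=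
  ⟨(hP.γ_pos k).le, (hP.2.2.2.2.1 k).2⟩

lemma δ_mem_Icc (hP : P.Valid) (k k' : Fin P.K) : P.δ k k' ∈ Set.Icc 0 1 :=
  hP.2.2.2.2.2.1 k k'

lemma τ_mul_ρp_mul_mul_pos (hP : P.Valid) {a b : ℝ} (ha : 0 < a) (hb : 0 < b) :
    0 < (P.τ : ℝ) * P.ρp * a * b :=
  mul_pos (mul_pos (mul_pos hP.τ_pos hP.ρp_pos) ha) hb

end Valid

def cDenom (P : Params) (κt κr : ℝ) (m : ℕ) (k : Fin P.K) : ℝ :=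
  P.ρp * ∑ k' : Fin P.K, P.β m k' * (κr * κt * (P.τ : ℝ) * P.δ k k' + (1 - κr * κt)) + P.σ2

lemma cDenom_mem_Icc (hP : P.Valid) (hβmin : 0 < βmin)
    (hβ : ∀ m k, βmin ≤ P.β m k ∧ P.β m k ≤ βmax)
    (hκt : κt ∈ Set.Ioc 0 1) (hκr : κr ∈ Set.Ioc 0 1) :
    P.cDenom κt κr m k ∈ Set.Icc P.σ2 (P.ρp * (P.K * (βmax * (P.τ + 1))) + P.σ2) := by
  have hw : ∀ k', κr * κt * (P.τ : ℝ) * P.δ k k' + (1 - κr * κt) ∈ Set.Icc 0 ((P.τ : ℝ) + 1) :=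
    fun k' => mul_mul_add_one_sub_mem_Icc ⟨(mul_pos hκr.1 hκt.1).le,
      mul_le_one₀ hκr.2 hκt.1.le hκt.2⟩ hP.τ_pos.le (hP.δ_mem_Icc k k')
  have hβ0 : ∀ k', 0 ≤ P.β m k' := fun k' => hβmin.le.trans (hβ m k').1
  have hsum_nonneg : 0 ≤ ∑ k', P.β m k' * (κr * κt * (P.τ : ℝ) * P.δ k k' + (1 - κr * κt)) :=
    sum_nonneg fun k' _ => mul_nonneg (hβ0 k') (hw k').1
  have hsum_le : ∑ k', P.β m k' * (κr * κt * (P.τ : ℝ) * P.δ k k' + (1 - κr * κt)) ≤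
      P.K * (βmax * (P.τ + 1)) :=
    calc _ ≤ ∑ _k' : Fin P.K, βmax * ((P.τ : ℝ) + 1) := sum_le_sum fun k' _ =>
          mul_le_mul (hβ m k').2 (hw k').2 (hw k').1 ((hβ0 k').trans (hβ m k').2)
      _ = _ := by simp
  exact ⟨le_add_of_nonneg_left (mul_nonneg hP.ρp_pos.le hsum_nonneg),
    add_le_add_left (mul_le_mul_of_nonneg_left hsum_le hP.ρp_pos.le) _⟩

lemma lam_eq (hs : 0 ≤ (P.τ : ℝ) * P.ρp * κr * κt) :
    P.lam κt κr m k = (P.τ : ℝ) * P.ρp * κr * κt * P.β m k ^ 2 / P.cDenom κt κr m k := by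
  rw [lam, c, ← cDenom, mul_div_assoc', mul_mul_mul_comm, Real.mul_self_sqrt hs, sq]

lemma sq_c_eq (hs : 0 ≤ (P.τ : ℝ) * P.ρp * κr * κt) :
    P.c κt κr m k ^ 2 =
      (P.τ : ℝ) * P.ρp * κr * κt * P.β m k ^ 2 / P.cDenom κt κr m k ^ 2 := by
  rw [c, ← cDenom, div_pow, mul_pow, Real.sq_sqrt hs]

lemma lam_mem_Icc (hP : P.Valid) (hβmin : 0 < βmin)
    (hβ : ∀ m k, βmin ≤ P.β m k ∧ P.β m k ≤ βmax) (hκt : κt ∈ Set.Ioc 0 1)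
    (hκr : κr ∈ Set.Ioc 0 1) :
    P.lam κt κr m k ∈ Set.Icc
      (κr * ((P.τ : ℝ) * P.ρp * κt * βmin ^ 2 / (P.ρp * (P.K * (βmax * (P.τ + 1))) + P.σ2)))
      (κr * ((P.τ : ℝ) * P.ρp * κt * βmax ^ 2 / P.σ2)) := by
  have hs := hP.τ_mul_ρp_mul_mul_pos hκr.1 hκt.1
  have hden := cDenom_mem_Icc (m := m) (k := k) hP hβmin hβ hκt hκr
  rw [lam_eq hs.le]
  constructor
  · calc _ = (P.τ : ℝ) * P.ρp * κr * κt * βmin ^ 2 /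
          (P.ρp * (P.K * (βmax * (P.τ + 1))) + P.σ2) := by ring
      _ ≤ _ := div_le_div₀ (by positivity) (by gcongr; exact (hβ m k).1)
          (hP.σ2_pos.trans_le hden.1) hden.2
  · calc _ ≤ (P.τ : ℝ) * P.ρp * κr * κt * βmax ^ 2 / P.σ2 :=
          div_le_div₀ (by positivity)
            (by gcongr; exacts [hβmin.le.trans (hβ m k).1, (hβ m k).2]) hP.σ2_pos hden.1
      _ = _ := by ring

lemma sq_c_le (hP : P.Valid) (hβmin : 0 < βmin)
    (hβ : ∀ m k, βmin ≤ P.β m k ∧ P.β m k ≤ βmax) (hκt : κt ∈ Set.Ioc 0 1)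
    (hκr : κr ∈ Set.Ioc 0 1) :
    P.c κt κr m k ^ 2 ≤ κr * ((P.τ : ℝ) * P.ρp * κt * βmax ^ 2 / P.σ2 ^ 2) := by
  have hs := hP.τ_mul_ρp_mul_mul_pos hκr.1 hκt.1
  have hden := cDenom_mem_Icc (m := m) (k := k) hP hβmin hβ hκt hκr
  calc P.c κt κr m k ^ 2 = (P.τ : ℝ) * P.ρp * κr * κt * P.β m k ^ 2 / P.cDenom κt κr m k ^ 2 :=
        sq_c_eq hs.le
    _ ≤ (P.τ : ℝ) * P.ρp * κr * κt * βmax ^ 2 / P.σ2 ^ 2 :=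
        div_le_div₀ (by positivity) (by gcongr; exacts [hβmin.le.trans (hβ m k).1, (hβ m k).2])
          (pow_pos hP.σ2_pos 2) (by gcongr; exacts [hP.σ2_pos.le, hden.1])
    _ = _ := by ring

lemma exists_lam_bounds (hP : P.Valid) (hβmin : 0 < βmin)
    (hβ : ∀ m k, βmin ≤ P.β m k ∧ P.β m k ≤ βmax) (hκt : κt ∈ Set.Ioc 0 1) :
    ∃ l L C, 0 < l ∧ ∀ κr ∈ Set.Ioc 0 1, ∀ m k,
      P.lam κt κr m k ∈ Set.Icc (κr * l) (κr * L) ∧ P.c κt κr m k ^ 2 ≤ κr * C := by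
  refine ⟨_, _, _, ?_, fun κr hκr m k =>
    ⟨lam_mem_Icc hP hβmin hβ hκt hκr, sq_c_le hP hβmin hβ hκt hκr⟩⟩
  have hβmax : 0 ≤ βmax := hβmin.le.trans ((hβ 0 ⟨0, hP.1⟩).1.trans (hβ 0 ⟨0, hP.1⟩).2)
  have := hP.τ_mul_ρp_mul_mul_pos hκt.1 (pow_pos hβmin 2)
  have := hP.ρp_pos; have := hP.σ2_pos
  positivity

lemma lam_mul_β_mem_Icc (hβmin : 0 < βmin) (hβ : ∀ m k, βmin ≤ P.β m k ∧ P.β m k ≤ βmax)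
    (hlam : P.lam κt κr m k ∈ Set.Icc 0 (κr * L)) (k' : Fin P.K) :
    P.lam κt κr m k * P.β m k' ∈ Set.Icc 0 (κr * L * βmax) :=
  ⟨mul_nonneg hlam.1 (hβmin.le.trans (hβ m k').1),
    mul_le_mul hlam.2 (hβ m k').2 (hβmin.le.trans (hβ m k').1) (hlam.1.trans hlam.2)⟩

lemma B_summand_mem_Icc (hP : P.Valid) (hβmin : 0 < βmin)
    (hβ : ∀ m k, βmin ≤ P.β m k ∧ P.β m k ≤ βmax) (hκr : κr ∈ Set.Ioc 0 1)
    (hlam : P.lam κt κr m k ∈ Set.Icc 0 (κr * L)) (hc : P.c κt κr m k ^ 2 ≤ κr * C)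
    (k' : Fin P.K) :
    P.lam κt κr m k * P.β m k' + P.ρp * (1 - κr) * (P.c κt κr m k ^ 2 * P.β m k' ^ 2) ∈
      Set.Icc 0 (κr * L * βmax + P.ρp * (κr * C * βmax ^ 2)) := by
  have hβ0 : 0 ≤ P.β m k' := hβmin.le.trans (hβ m k').1
  have hρp := hP.ρp_pos.le
  have hlamβ := lam_mul_β_mem_Icc hβmin hβ hlam k'
  have hcβ : P.c κt κr m k ^ 2 * P.β m k' ^ 2 ∈ Set.Icc 0 (κr * C * βmax ^ 2) :=
    ⟨by positivity, mul_le_mul hc (pow_le_pow_left₀ hβ0 (hβ m k').2 2) (by positivity)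
      ((sq_nonneg _).trans hc)⟩
  have hdamp : (1 - κr) * (P.c κt κr m k ^ 2 * P.β m k' ^ 2) ∈ Set.Icc 0 (κr * C * βmax ^ 2) :=
    ⟨mul_nonneg (sub_nonneg.2 hκr.2) hcβ.1,
      (mul_le_of_le_one_left hcβ.1 (sub_le_self 1 hκr.1.le)).trans hcβ.2⟩
  rw [mul_assoc P.ρp]
  exact ⟨add_nonneg hlamβ.1 (mul_nonneg hρp hdamp.1),
    add_le_add hlamβ.2 (mul_le_mul_of_nonneg_left hdamp.2 hρp)⟩

lemma D_summand_mem_Icc (hP : P.Valid) (hβmin : 0 < βmin)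
    (hβ : ∀ m k, βmin ≤ P.β m k ∧ P.β m k ≤ βmax) (hκt : κt ∈ Set.Ioc 0 1)
    (hκr : κr ∈ Set.Ioc 0 1)
    (hlam : P.lam κt κr m k ∈ Set.Icc 0 (κr * L)) (hc : P.c κt κr m k ^ 2 ≤ κr * C)
    (k' : Fin P.K) :
    P.lam κt κr m k * P.β m k' + P.c κt κr m k ^ 2 * (1 - κr) * P.ρp * P.β m k' ^ 2 +
      P.c κt κr m k ^ 2 * κr * P.ρp * P.β m k' * ((P.τ : ℝ) * κt * P.δ k k' + (1 - κt)) ∈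
      Set.Icc 0 (κr * L * βmax + P.ρp * (κr * C * (βmax * (βmax + (P.τ + 1))))) := by
  set w := (P.τ : ℝ) * κt * P.δ k k' + (1 - κt) with hw_def
  have hβ0 : 0 ≤ P.β m k' := hβmin.le.trans (hβ m k').1
  have hρp := hP.ρp_pos.le
  have hw : w ∈ Set.Icc 0 ((P.τ : ℝ) + 1) := by
    rw [hw_def, mul_comm (P.τ : ℝ)]
    exact mul_mul_add_one_sub_mem_Icc ⟨hκt.1.le, hκt.2⟩ hP.τ_pos.le (hP.δ_mem_Icc k k')
  have hmix : (1 - κr) * P.β m k' + κr * w ∈ Set.Icc 0 (βmax + (P.τ + 1)) := by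
    have h1 := mul_le_of_le_one_left hβ0 (sub_le_self 1 hκr.1.le)
    have h2 := mul_le_of_le_one_left hw.1 hκr.2
    have h3 := mul_nonneg (sub_nonneg.2 hκr.2) hβ0
    have h4 := mul_nonneg hκr.1.le hw.1
    constructor <;> linarith [(hβ m k').2, hw.2]
  have hcβ : P.c κt κr m k ^ 2 * (P.β m k' * ((1 - κr) * P.β m k' + κr * w)) ∈
      Set.Icc 0 (κr * C * (βmax * (βmax + (P.τ + 1)))) := by
    have hc0 : 0 ≤ P.c κt κr m k ^ 2 := sq_nonneg _
    have hβmix := mul_nonneg hβ0 hmix.1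
    exact ⟨mul_nonneg hc0 hβmix, mul_le_mul hc (mul_le_mul (hβ m k').2 hmix.2 hmix.1
      (hβ0.trans (hβ m k').2)) hβmix (hc0.trans hc)⟩
  have hlamβ := lam_mul_β_mem_Icc hβmin hβ hlam k'
  rw [show P.lam κt κr m k * P.β m k' + P.c κt κr m k ^ 2 * (1 - κr) * P.ρp * P.β m k' ^ 2 +
      P.c κt κr m k ^ 2 * κr * P.ρp * P.β m k' * w = P.lam κt κr m k * P.β m k' +
      P.ρp * (P.c κt κr m k ^ 2 * (P.β m k' * ((1 - κr) * P.β m k' + κr * w))) by ring]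
  exact ⟨add_nonneg hlamβ.1 (mul_nonneg hρp hcβ.1),
    add_le_add hlamβ.2 (mul_le_mul_of_nonneg_left hcβ.2 hρp)⟩

lemma B_eq : P.B κt κr M k = ∑ m ∈ range M, ∑ k', P.γ k' *
    (P.lam κt κr m k * P.β m k' + P.ρp * (1 - κr) * (P.c κt κr m k ^ 2 * P.β m k' ^ 2)) := by
  simp only [B, mul_sum, ← sum_add_distrib]
  exact sum_comm

lemma B_mem_Icc (hP : P.Valid) (hβmin : 0 < βmin)
    (hβ : ∀ m k, βmin ≤ P.β m k ∧ P.β m k ≤ βmax) (hκr : κr ∈ Set.Ioc 0 1)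
    (hlam : ∀ m, P.lam κt κr m k ∈ Set.Icc 0 (κr * L)) (hc : ∀ m, P.c κt κr m k ^ 2 ≤ κr * C) :
    P.B κt κr M k ∈ Set.Icc 0 (P.K * (L * βmax + P.ρp * (C * βmax ^ 2)) * (M * κr)) := by
  rw [B_eq]
  convert sum_range_sum_mul_mem_Icc hP.γ_mem_Icc
    (fun m => B_summand_mem_Icc hP hβmin hβ hκr (hlam m) (hc m)) M using 2
  simp only [Fintype.card_fin]
  ring

lemma D_mem_Icc (hP : P.Valid) (hβmin : 0 < βmin)
    (hβ : ∀ m k, βmin ≤ P.β m k ∧ P.β m k ≤ βmax) (hκt : κt ∈ Set.Ioc 0 1)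
    (hκr : κr ∈ Set.Ioc 0 1)
    (hlam : ∀ m, P.lam κt κr m k ∈ Set.Icc 0 (κr * L)) (hc : ∀ m, P.c κt κr m k ^ 2 ≤ κr * C) :
    P.D κt κr M k ∈
      Set.Icc 0 (P.K * (L * βmax + P.ρp * (C * (βmax * (βmax + (P.τ + 1))))) * (M * κr)) := by
  unfold D
  convert sum_range_sum_mul_mem_Icc hP.γ_mem_Icc
    (fun m => D_summand_mem_Icc hP hβmin hβ hκt hκr (hlam m) (hc m)) M using 2
  simp only [Fintype.card_fin]
  ring

lemma E_mem_Icc (hP : P.Valid) {ρu : ℝ} (hρu : 0 < ρu)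
    (hlam : ∀ m, P.lam κt κr m k ∈ Set.Icc 0 (κr * L)) :
    P.E κt κr ρu M k ∈ Set.Icc 0 (P.σ2 / ρu * L * (M * κr)) := by
  have hσρ : 0 ≤ P.σ2 / ρu := div_nonneg hP.σ2_pos.le hρu.le
  have hsum : ∑ m ∈ range M, P.lam κt κr m k ≤ M * (κr * L) := by
    simpa using sum_le_card_nsmul (range M) _ _ fun m _ => (hlam m).2
  refine ⟨mul_nonneg hσρ (sum_nonneg fun m _ => (hlam m).1), ?_⟩
  calc P.E κt κr ρu M k ≤ P.σ2 / ρu * (M * (κr * L)) := mul_le_mul_of_nonneg_left hsum hσρ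
    _ = _ := by ring

lemma le_A (hP : P.Valid) {l : ℝ} (hl : 0 ≤ l) (hκr : 0 ≤ κr)
    (hlam : ∀ m, κr * l ≤ P.lam κt κr m k) :
    P.γ k * l ^ 2 * (M * κr) ^ 2 ≤ P.A κt κr M k := by
  have hsum : M * (κr * l) ≤ ∑ m ∈ range M, P.lam κt κr m k := by
    simpa using card_nsmul_le_sum (range M) _ _ fun m _ => hlam m
  calc P.γ k * l ^ 2 * (M * κr) ^ 2 = P.γ k * (M * (κr * l)) ^ 2 := by ring
    _ ≤ P.A κt κr M k := by unfold A; gcongr; exact (hP.γ_pos k).le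

lemma exists_noncoherent_ratios_le (hP : P.Valid) {ρu : ℝ} (hρu : 0 < ρu) (hβmin : 0 < βmin)
    (hβ : ∀ m k, βmin ≤ P.β m k ∧ P.β m k ≤ βmax) (hκt : κt ∈ Set.Ioc 0 1) (k : Fin P.K) :
    ∃ C, ∀ κr ∈ Set.Ioc 0 1, ∀ M : ℕ, 0 < M →
      P.B κt κr M k / (κt * P.A κt κr M k) ∈ Set.Icc 0 (C / ((M : ℝ) * κr ^ 2)) ∧
      (1 - κr) * P.D κt κr M k / (κr * κt * P.A κt κr M k) ∈
        Set.Icc 0 (C / ((M : ℝ) * κr ^ 2)) ∧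
      P.E κt κr ρu M k / (κr * κt * P.A κt κr M k) ∈ Set.Icc 0 (C / ((M : ℝ) * κr ^ 2)) := by
  obtain ⟨l, L, C, hl, hbounds⟩ := exists_lam_bounds hP hβmin hβ hκt
  have ha : 0 < P.γ k * l ^ 2 := mul_pos (hP.γ_pos k) (pow_pos hl 2)
  set cB := P.K * (L * βmax + P.ρp * (C * βmax ^ 2)) / (κt * (P.γ k * l ^ 2))
  set cD := P.K * (L * βmax + P.ρp * (C * (βmax * (βmax + (P.τ + 1))))) / (κt * (P.γ k * l ^ 2))
  set cE := P.σ2 / ρu * L / (κt * (P.γ k * l ^ 2))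
  refine ⟨max (max cB cD) cE, fun κr hκr M hM => ?_⟩
  have hM' : (0 : ℝ) < M := Nat.cast_pos.2 hM
  have hκr0 := hκr.1
  have hκt0 := hκt.1
  have hlam : ∀ m, P.lam κt κr m k ∈ Set.Icc 0 (κr * L) := fun m =>
    ⟨(mul_nonneg hκr0.le hl.le).trans (hbounds κr hκr m k).1.1, (hbounds κr hκr m k).1.2⟩
  have hc : ∀ m, P.c κt κr m k ^ 2 ≤ κr * C := fun m => (hbounds κr hκr m k).2
  have hA := le_A (M := M) hP hl.le hκr0.le fun m => (hbounds κr hκr m k).1.1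
  have hA0 : 0 < P.A κt κr M k := lt_of_lt_of_le (by positivity) hA
  have hB := B_mem_Icc (M := M) hP hβmin hβ hκr hlam hc
  have hD := D_mem_Icc (M := M) hP hβmin hβ hκt hκr hlam hc
  have hD' : (1 - κr) * P.D κt κr M k ∈
      Set.Icc 0 (P.K * (L * βmax + P.ρp * (C * (βmax * (βmax + (P.τ + 1))))) * (M * κr)) :=
    ⟨mul_nonneg (sub_nonneg.2 hκr.2) hD.1,
      (mul_le_of_le_one_left hD.1 (sub_le_self 1 hκr0.le)).trans hD.2⟩
  have hE := E_mem_Icc (M := M) hP hρu hlam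
  have hBκr : P.B κt κr M k / (κt * P.A κt κr M k) ≤
      P.B κt κr M k / (κr * κt * P.A κt κr M k) := by
    rw [mul_assoc]
    exact div_le_div_of_nonneg_left hB.1 (by positivity)
      (mul_le_of_le_one_left (by positivity) hκr.2)
  have hBr := div_mul_mul_mem_Icc_of_mem_Icc_of_mul_sq_le hB hA ha hκt0 hκr0 hM'
  have weaken : ∀ {c x : ℝ}, c ≤ max (max cB cD) cE → x ∈ Set.Icc 0 (c / (M * κr ^ 2)) →
      x ∈ Set.Icc 0 (max (max cB cD) cE / (M * κr ^ 2)) := fun hc hx =>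
    Set.Icc_subset_Icc_right (div_le_div_of_nonneg_right hc (by positivity)) hx
  exact ⟨weaken (le_max_of_le_left (le_max_left _ _))
      ⟨div_nonneg hB.1 (by positivity), hBκr.trans hBr.2⟩,
    weaken (le_max_of_le_left (le_max_right _ _))
      (div_mul_mul_mem_Icc_of_mem_Icc_of_mul_sq_le hD' hA ha hκt0 hκr0 hM'),
    weaken (le_max_right _ _)
      (div_mul_mul_mem_Icc_of_mem_Icc_of_mul_sq_le hE hA ha hκt0 hκr0 hM')⟩

end Params

/-- Intermediate step of Corollary 1: with `z_t = 0` and `0 ≤ z_r < 1/2`, the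
non-coherent terms vanish relative to the desired-signal term:
`B_k/(κ_{t0} A_k) → 0`, `(1−κ_r)D_k/(κ_r κ_{t0} A_k) → 0`, and
`E_k/(κ_r κ_{t0} A_k) → 0` as `M → ∞`. -/
theorem hardware_scaling_law_noncoherent_terms_vanish
    (P : Params) (hP : P.Valid) (ρu : ℝ) (hρu : 0 < ρu)
    (βmin βmax : ℝ) (hβmin : 0 < βmin)
    (hβ : ∀ m : ℕ, ∀ k : Fin P.K, βmin ≤ P.β m k ∧ P.β m k ≤ βmax)
    (κt0 κr0 : ℝ) (hκt0 : 0 < κt0 ∧ κt0 ≤ 1) (hκr0 : 0 < κr0 ∧ κr0 ≤ 1)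
    (zr : ℝ) (hzr : 0 ≤ zr ∧ zr < 1 / 2) (k : Fin P.K) :
    Filter.Tendsto
      (fun M : ℕ =>
        P.B κt0 (κr0 / (M : ℝ) ^ zr) M k /
          (κt0 * P.A κt0 (κr0 / (M : ℝ) ^ zr) M k))
      Filter.atTop (nhds 0) ∧
    Filter.Tendsto
      (fun M : ℕ =>
        (1 - κr0 / (M : ℝ) ^ zr) * P.D κt0 (κr0 / (M : ℝ) ^ zr) M k /
          (κr0 / (M : ℝ) ^ zr * κt0 * P.A κt0 (κr0 / (M : ℝ) ^ zr) M k))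
      Filter.atTop (nhds 0) ∧
    Filter.Tendsto
      (fun M : ℕ =>
        P.E κt0 (κr0 / (M : ℝ) ^ zr) ρu M k /
          (κr0 / (M : ℝ) ^ zr * κt0 * P.A κt0 (κr0 / (M : ℝ) ^ zr) M k))
      Filter.atTop (nhds 0) := by
  obtain ⟨C, hC⟩ := P.exists_noncoherent_ratios_le hP hρu hβmin hβ hκt0 k
  have hvanish : ∀ f : ℕ → ℝ,
      (∀ᶠ M : ℕ in atTop, f M ∈ Set.Icc 0 (C / ((M : ℝ) * (κr0 / (M : ℝ) ^ zr) ^ 2))) →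
      Tendsto f atTop (𝓝 0) := fun f hf =>
    squeeze_zero' (hf.mono fun _ h => h.1) (hf.mono fun _ h => h.2)
      (tendsto_const_nhds.div_atTop (tendsto_natCast_mul_div_rpow_sq_atTop hκr0.1 hzr.2))
  have hratios := fun M (hM : 0 < M) => hC _ (div_rpow_mem_Ioc hκr0 hzr.1 hM) M hM
  exact ⟨hvanish _ ((eventually_gt_atTop 0).mono fun M hM => (hratios M hM).1),
    hvanish _ ((eventually_gt_atTop 0).mono fun M hM => (hratios M hM).2.1),
    hvanish _ ((eventually_gt_atTop 0).mono fun M hM => (hratios M hM).2.2)⟩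
end
end

section
/- UE hardware-quality ceiling on the spectral efficiency: if κ_t < 1, then for every UE index k and regardless of the number of APs M, the number of UEs K, and the AP hardware quality κ_r, the SINR of Theorem 1 satisfies SINR_k ≤ κ_t² τ / ( (1 − κ_t)(κ_t τ + 1) ) ≤ κ_t/(1 − κ_t), and consequently the spectral efficiency satisfies R_k = log₂(1 + SINR_k) ≤ log₂( 1/(1 − κ_t) ). This shows that the impairments in the UE transmitter hardware impose a finite spectral-efficiency limit that cannot be overcome by adding APs. -/
open Finset Filter Topology

noncomputable section

/-! The coherent-interference term `C_k` contains, at `k' = k`, the summand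
`γ_k (1 + (1 - κ_t)/(κ_t τ)) (Σ_m λ_{mk})² = (1 + (1 - κ_t)/(κ_t τ)) A_k`, which comes from the UE
transmitter distortion of UE `k` itself and grows with `M` exactly as fast as the desired signal.
All other terms of the denominator are nonnegative, so the denominator is at least
`κ_r (1 - κ_t)(1 + 1/(κ_t τ)) A_k`, and the SINR is at most the ratio of the two multiples of
`A_k`, whatever `M`, `K`, `κ_r` and the fading coefficients. -/

namespace Params

variable (P : Params) {κt κr : ℝ}

theorem c_nonneg (hP : P.Valid) (hκt : 0 ≤ κt ∧ κt ≤ 1) (hκr : 0 ≤ κr ∧ κr ≤ 1) {m : ℕ}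
    (hβ : ∀ k', 0 ≤ P.β m k') (k : Fin P.K) : 0 ≤ P.c κt κr m k := by
  obtain ⟨-, -, hρp, hσ2, -, hδ, -⟩ := hP
  have hκ : κr * κt ≤ 1 := mul_le_one₀ hκr.2 hκt.1 hκt.2
  have hsum : 0 ≤ ∑ k' : Fin P.K, P.β m k' * (κr * κt * (P.τ : ℝ) * P.δ k k' + (1 - κr * κt)) :=
    sum_nonneg fun k' _ => mul_nonneg (hβ k') <| by
      have := (hδ k k').1
      have := hκr.1
      have := hκt.1
      have : 0 ≤ κr * κt * (P.τ : ℝ) * P.δ k k' := by positivity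
      linarith
  have := hβ k
  unfold c
  positivity

theorem lam_nonneg (hP : P.Valid) (hκt : 0 ≤ κt ∧ κt ≤ 1) (hκr : 0 ≤ κr ∧ κr ≤ 1) {m : ℕ}
    (hβ : ∀ k', 0 ≤ P.β m k') (k : Fin P.K) : 0 ≤ P.lam κt κr m k :=
  mul_nonneg (mul_nonneg (Real.sqrt_nonneg _) (hβ k)) (P.c_nonneg hP hκt hκr hβ k)

variable {M : ℕ}

theorem A_nonneg (hP : P.Valid) (k : Fin P.K) : 0 ≤ P.A κt κr M k :=
  mul_nonneg (hP.2.2.2.2.1 k).1.le (sq_nonneg _)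

theorem B_nonneg (hP : P.Valid) (hκt : 0 ≤ κt ∧ κt ≤ 1) (hκr : 0 ≤ κr ∧ κr ≤ 1)
    (hβ : ∀ m < M, ∀ k', 0 ≤ P.β m k') (k : Fin P.K) : 0 ≤ P.B κt κr M k := by
  have hlam := fun m (hm : m ∈ range M) => P.lam_nonneg hP hκt hκr (hβ m (mem_range.1 hm)) k
  have hρp := hP.2.2.1
  have hκr' : 0 ≤ 1 - κr := by linarith
  refine sum_nonneg fun k' _ => mul_nonneg (hP.2.2.2.2.1 k').1.le (add_nonneg ?_ ?_)
  · exact sum_nonneg fun m hm => mul_nonneg (hlam m hm) (hβ m (mem_range.1 hm) k')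
  · exact mul_nonneg (by positivity) (sum_nonneg fun m _ => by positivity)

theorem D_nonneg (hP : P.Valid) (hκt : 0 ≤ κt ∧ κt ≤ 1) (hκr : 0 ≤ κr ∧ κr ≤ 1)
    (hβ : ∀ m < M, ∀ k', 0 ≤ P.β m k') (k : Fin P.K) : 0 ≤ P.D κt κr M k := by
  have hlam := fun m (hm : m < M) => P.lam_nonneg hP hκt hκr (hβ m hm) k
  obtain ⟨-, -, hρp, -, hγ, hδ, -⟩ := hP
  have hκr' : 0 ≤ 1 - κr := by linarith
  have hκt' : 0 ≤ 1 - κt := by linarith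
  refine sum_nonneg fun m hm => sum_nonneg fun k' _ => mul_nonneg (hγ k').1.le ?_
  have := hlam m (mem_range.1 hm)
  have := hβ m (mem_range.1 hm) k'
  have := (hδ k k').1
  have := hκr.1
  have := hκt.1
  positivity

theorem E_nonneg (hP : P.Valid) (hκt : 0 ≤ κt ∧ κt ≤ 1) (hκr : 0 ≤ κr ∧ κr ≤ 1) {ρu : ℝ}
    (hρu : 0 ≤ ρu) (hβ : ∀ m < M, ∀ k', 0 ≤ P.β m k') (k : Fin P.K) :
    0 ≤ P.E κt κr ρu M k :=
  mul_nonneg (div_nonneg hP.2.2.2.1.le hρu)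
    (sum_nonneg fun m hm => P.lam_nonneg hP hκt hκr (hβ m (mem_range.1 hm)) k)

theorem A_mul_le_C (hP : P.Valid) (hκt : 0 ≤ κt ∧ κt ≤ 1) {k : Fin P.K}
    (hβ : ∀ m < M, P.β m k ≠ 0) :
    (1 + (1 - κt) / (κt * P.τ)) * P.A κt κr M k ≤ P.C κt κr M k := by
  obtain ⟨-, -, -, -, hγ, hδ, hδd⟩ := hP
  have he : 0 ≤ (1 - κt) / (κt * P.τ) := div_nonneg (by linarith) (by have := hκt.1; positivity)
  have hdiag : ∑ m ∈ range M, P.lam κt κr m k * (P.β m k / P.β m k) =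
      ∑ m ∈ range M, P.lam κt κr m k :=
    sum_congr rfl fun m hm => by rw [div_self (hβ m (mem_range.1 hm)), mul_one]
  calc (1 + (1 - κt) / (κt * P.τ)) * P.A κt κr M k
      = P.γ k * (P.δ k k + (1 - κt) / (κt * P.τ)) *
          (∑ m ∈ range M, P.lam κt κr m k * (P.β m k / P.β m k)) ^ 2 := by
        rw [hdiag, hδd, A]; ring
    _ ≤ P.C κt κr M k := by
        refine single_le_sum (f := fun k' => P.γ k' * (P.δ k k' + (1 - κt) / (κt * P.τ)) *
          (∑ m ∈ range M, P.lam κt κr m k * (P.β m k' / P.β m k)) ^ 2)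
          (fun k' _ => ?_) (mem_univ k)
        have := (hγ k').1
        have := (hδ k k').1
        positivity

def SINRDenom (κt κr ρu : ℝ) (M : ℕ) (k : Fin P.K) : ℝ :=
  κr * P.B κt κr M k + κr * P.C κt κr M k - κr * κt * P.A κt κr M k +
    (1 - κr) * P.D κt κr M k + P.E κt κr ρu M k

theorem SINR_eq_div (ρu : ℝ) (k : Fin P.K) :
    P.SINR κt κr ρu M k = κr * κt * P.A κt κr M k / P.SINRDenom κt κr ρu M k :=
  rfl

theorem SINRDenom_ge (hP : P.Valid) (hκt : 0 ≤ κt ∧ κt ≤ 1) (hκr : 0 ≤ κr ∧ κr ≤ 1)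
    {ρu : ℝ} (hρu : 0 ≤ ρu) (hβ : ∀ m < M, ∀ k', 0 < P.β m k') (k : Fin P.K) :
    κr * (1 - κt) * (1 + 1 / (κt * P.τ)) * P.A κt κr M k ≤ P.SINRDenom κt κr ρu M k := by
  have hβ' : ∀ m < M, ∀ k', 0 ≤ P.β m k' := fun m hm k' => (hβ m hm k').le
  have hC := P.A_mul_le_C (κr := κr) hP hκt fun m hm => (hβ m hm k).ne'
  have hB := P.B_nonneg hP hκt hκr hβ' k
  have hD := mul_nonneg (sub_nonneg.2 hκr.2) (P.D_nonneg hP hκt hκr hβ' k)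
  have hE := P.E_nonneg hP hκt hκr hρu hβ' k
  calc κr * (1 - κt) * (1 + 1 / (κt * P.τ)) * P.A κt κr M k
      = κr * ((1 + (1 - κt) / (κt * P.τ)) * P.A κt κr M k) - κr * κt * P.A κt κr M k := by ring
    _ ≤ κr * P.C κt κr M k - κr * κt * P.A κt κr M k := by gcongr; exact hκr.1
    _ ≤ P.SINRDenom κt κr ρu M k := by
        unfold SINRDenom
        linarith [mul_nonneg hκr.1 hB]

theorem SINRDenom_nonneg (hP : P.Valid) (hκt : 0 ≤ κt ∧ κt ≤ 1)
    (hκr : 0 ≤ κr ∧ κr ≤ 1) {ρu : ℝ} (hρu : 0 ≤ ρu) (hβ : ∀ m < M, ∀ k', 0 < P.β m k')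
    (k : Fin P.K) :
    0 ≤ P.SINRDenom κt κr ρu M k := by
  refine le_trans ?_ (P.SINRDenom_ge hP hκt hκr hρu hβ k)
  have := sub_nonneg.2 hκt.2
  have := hκt.1
  have := hκr.1
  have := P.A_nonneg (κt := κt) (κr := κr) (M := M) hP k
  positivity

theorem SINR_nonneg (hP : P.Valid) (hκt : 0 ≤ κt ∧ κt ≤ 1) (hκr : 0 ≤ κr ∧ κr ≤ 1) {ρu : ℝ}
    (hρu : 0 ≤ ρu) (hβ : ∀ m < M, ∀ k', 0 < P.β m k') (k : Fin P.K) :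
    0 ≤ P.SINR κt κr ρu M k := by
  rw [SINR_eq_div]
  exact div_nonneg (mul_nonneg (mul_nonneg hκr.1 hκt.1) (P.A_nonneg hP k))
    (P.SINRDenom_nonneg hP hκt hκr hρu hβ k)

theorem SINR_le (hP : P.Valid) (hκt : 0 < κt ∧ κt < 1) (hκr : 0 ≤ κr ∧ κr ≤ 1) {ρu : ℝ}
    (hρu : 0 ≤ ρu) (hβ : ∀ m < M, ∀ k', 0 < P.β m k') (k : Fin P.K) :
    P.SINR κt κr ρu M k ≤ κt ^ 2 * P.τ / ((1 - κt) * (κt * P.τ + 1)) := by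
  have hκt' : 0 ≤ κt ∧ κt ≤ 1 := ⟨hκt.1.le, hκt.2.le⟩
  have hτ : (0 : ℝ) < P.τ := Nat.cast_pos.2 hP.2.1
  have h1κt : 0 < 1 - κt := sub_pos.2 hκt.2
  have := hκt.1
  rw [SINR_eq_div]
  refine div_le_of_le_mul₀ (P.SINRDenom_nonneg hP hκt' hκr hρu hβ k) (by positivity) ?_
  calc κr * κt * P.A κt κr M k
      = κt ^ 2 * P.τ / ((1 - κt) * (κt * P.τ + 1)) *
          (κr * (1 - κt) * (1 + 1 / (κt * P.τ)) * P.A κt κr M k) := by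
        field_simp
    _ ≤ _ := by gcongr; exact P.SINRDenom_ge hP hκt' hκr hρu hβ k

end Params

theorem sq_mul_div_le_div_one_sub {κ τ : ℝ} (hκ₀ : 0 ≤ κ) (hκ₁ : κ < 1) (hτ : 0 ≤ τ) :
    κ ^ 2 * τ / ((1 - κ) * (κ * τ + 1)) ≤ κ / (1 - κ) := by
  have h1κ : 0 < 1 - κ := sub_pos.2 hκ₁
  rw [div_le_div_iff₀ (by positivity) h1κ]
  nlinarith [mul_nonneg hκ₀ hτ, sq_nonneg κ]

theorem ue_hardware_quality_ceiling_general
    (P : Params) (hP : P.Valid) (M : ℕ) (ρu : ℝ) (hρu : 0 < ρu)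
    (hβ : ∀ m < M, ∀ k : Fin P.K, 0 < P.β m k)
    (κt κr : ℝ) (hκt : 0 < κt ∧ κt < 1) (hκr : 0 < κr ∧ κr ≤ 1)
    (k : Fin P.K) :
    P.SINR κt κr ρu M k ≤ κt ^ 2 * (P.τ : ℝ) / ((1 - κt) * (κt * (P.τ : ℝ) + 1)) ∧
    κt ^ 2 * (P.τ : ℝ) / ((1 - κt) * (κt * (P.τ : ℝ) + 1)) ≤ κt / (1 - κt) ∧
    P.R κt κr ρu M k ≤ Real.logb 2 (1 / (1 - κt)) := by
  have hκr' : 0 ≤ κr ∧ κr ≤ 1 := ⟨hκr.1.le, hκr.2⟩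
  have hSINR := P.SINR_le hP hκt hκr' hρu.le hβ k
  have hceiling := sq_mul_div_le_div_one_sub hκt.1.le hκt.2 (Nat.cast_nonneg P.τ)
  refine ⟨hSINR, hceiling, ?_⟩
  have h1κt : 1 + κt / (1 - κt) = 1 / (1 - κt) := by
    field_simp [(sub_pos.2 hκt.2).ne']
    ring
  have hpos := P.SINR_nonneg hP ⟨hκt.1.le, hκt.2.le⟩ hκr' hρu.le hβ k
  exact Real.logb_le_logb_of_le (by norm_num) (by linarith) (by linarith)

/-- UE hardware-quality ceiling: if `κ_t < 1` then, independently of `M`, `K`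
and `κ_r`, `SINR_k ≤ κ_t² τ / ((1−κ_t)(κ_t τ + 1)) ≤ κ_t/(1−κ_t)` and hence
`R_k ≤ log₂(1/(1−κ_t))`. -/
theorem ue_hardware_quality_ceiling
    (P : Params) (hP : P.Valid) (M : ℕ) (hM : 1 ≤ M) (ρu : ℝ) (hρu : 0 < ρu)
    (hβ : ∀ m < M, ∀ k : Fin P.K, 0 < P.β m k)
    (κt κr : ℝ) (hκt : 0 < κt ∧ κt < 1) (hκr : 0 < κr ∧ κr ≤ 1)
    (k : Fin P.K) :
    P.SINR κt κr ρu M k ≤ κt ^ 2 * (P.τ : ℝ) / ((1 - κt) * (κt * (P.τ : ℝ) + 1)) ∧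
    κt ^ 2 * (P.τ : ℝ) / ((1 - κt) * (κt * (P.τ : ℝ) + 1)) ≤ κt / (1 - κt) ∧
    P.R κt κr ρu M k ≤ Real.logb 2 (1 / (1 - κt)) :=
  ue_hardware_quality_ceiling_general P hP M ρu hρu hβ κt κr hκt hκr k
end
end
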